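/- arXiv:1902.09111 — 2 statements merged into one kernel-verified Lean document; each statement's English description precedes it below -/
import Mathlib

section
/- The family {(m! n! ρ^{m+n})^{−1/2} J_{m,n}(z,ρ) : m, n ≥ 0} is orthonormal in L²(ℂ, μ), where dμ = (πρ)^{−1} exp(−(x²+y²)/ρ) dx dy; i.e., ∫_ℂ J_{m,n}(z,ρ) \overline{J_{p,q}(z,ρ)} dμ(z) = m! n! ρ^{m+n} if (m,n) = (p,q) and 0 otherwise. -/
open Finset MeasureTheory

/-- The complex Hermite polynomial `J_{m,n}(z, ρ)`. -/
noncomputable def hermiteJ (m n : ℕ) (z : ℂ) (ρ : ℝ) : ℂ :=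
  ∑ r ∈ Finset.range (min m n + 1),
    (-1 : ℂ) ^ r * (r.factorial : ℂ) * (m.choose r : ℂ) * (n.choose r : ℂ) *
      z ^ (m - r) * (starRingEnd ℂ z) ^ (n - r) * (ρ : ℂ) ^ r

/-- The complex Gaussian measure `dμ = (πρ)⁻¹ exp(−|z|²/ρ) dx dy` on `ℂ`. -/
noncomputable def gaussianMeasureC (ρ : ℝ) : Measure ℂ :=
  (volume : Measure ℂ).withDensity fun z =>
    ENNReal.ofReal ((Real.pi * ρ)⁻¹ * Real.exp (-(Complex.normSq z) / ρ))

/-!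
Write `⟨f, g⟩ = ∫ f ḡ dμ`. Rotations `z ↦ u z` preserve `μ` and multiply `z ^ a z̄ ^ b` by
`u ^ a ū ^ b`, so `⟨z ^ a, z ^ b⟩ = 0` for `a ≠ b`; `⟨z ^ a, z ^ a⟩ = a! ρ ^ a` is a Gamma integral.
Expanding `J_{m,n}` into monomials, `⟨J_{m,n}, z ^ a z̄ ^ b⟩` vanishes unless `m + b = n + a`, and
is then `ρ ^ (m + b)` times an `n`-th finite difference of `x ↦ (x choose b)`, which comes out as
`a! · b (b - 1) ⋯ (b - n + 1)`. Hence `J_{m,n}` is orthogonal to all `z ^ a z̄ ^ b` with `a < m`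
or `b < n`. Since `J_{p,q}` is `z ^ p z̄ ^ q` plus multiples of `z ^ (p - s) z̄ ^ (q - s)`, `s ≥ 1`,
`⟨J_{m,n}, J_{p,q}⟩ = 0` when `p < m` or `q < n` (and, by conjugate symmetry, when `m < p` or
`n < q`), while `⟨J_{m,n}, J_{m,n}⟩ = ⟨J_{m,n}, z ^ m z̄ ^ n⟩ = m! n! ρ ^ (m + n)`.
-/

open Real Complex ComplexConjugate
open scoped Nat

def hermiteCoeff (m n r : ℕ) : ℤ := (-1) ^ r * r ! * m.choose r * n.choose r

theorem hermiteJ_eq_sum (m n : ℕ) (z : ℂ) (ρ : ℝ) :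
    hermiteJ m n z ρ = ∑ r ∈ range (min m n + 1),
      (hermiteCoeff m n r * ρ ^ r : ℂ) * (z ^ (m - r) * conj z ^ (n - r)) := by
  unfold hermiteJ hermiteCoeff
  push_cast
  exact sum_congr rfl fun r _ => by ring

theorem conj_hermiteJ_eq_sum (m n : ℕ) (z : ℂ) (ρ : ℝ) :
    conj (hermiteJ m n z ρ) = ∑ r ∈ range (min m n + 1),
      (hermiteCoeff m n r * ρ ^ r : ℂ) * conj (z ^ (m - r) * conj z ^ (n - r)) := by
  simp [hermiteJ_eq_sum, map_sum, map_mul]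

theorem alternating_sum_choose_mul_choose (n c k : ℕ) :
    ∑ r ∈ range (n + 1), (-1 : ℤ) ^ r * n.choose r * (c + n - r).choose k
      = if n ≤ k then (c.choose (k - n) : ℤ) else 0 := by
  have hdiff : (fwdDiff 1)^[n] (fun x ↦ x.choose k : ℕ → ℤ) c
      = if n ≤ k then (c.choose (k - n) : ℤ) else 0 := by
    split_ifs with h
    · obtain ⟨j, rfl⟩ := Nat.exists_eq_add_of_le h
      rw [fwdDiff_iter_choose, Nat.add_sub_cancel_left]
    · obtain ⟨j, rfl⟩ := Nat.exists_eq_add_of_lt (not_le.mp h)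
      have hk : (fwdDiff 1)^[k] (fun x ↦ x.choose k : ℕ → ℤ) = fun _ ↦ 1 := by
        simpa using fwdDiff_iter_choose 0 k
      rw [show k + j + 1 = (j + 1) + k by omega, Function.iterate_add_apply, hk,
        Function.iterate_succ_apply]
      simp [fwdDiff_iter_eq_sum_shift]
  rw [← hdiff, fwdDiff_iter_eq_sum_shift, ← sum_range_reflect]
  refine sum_congr rfl fun r hr => ?_
  have hr : r ≤ n := Nat.lt_succ_iff.mp (mem_range.mp hr)
  rw [Nat.add_sub_cancel, Nat.choose_symm hr, smul_eq_mul, smul_eq_mul, mul_one,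
    show c + n - (n - r) = c + r by omega]

theorem factorial_mul_choose_mul_factorial_sub_add {m r : ℕ} (h : r ≤ m) (b : ℕ) :
    r ! * m.choose r * (m - r + b)! = m ! * b ! * (m - r + b).choose b := by
  apply Nat.eq_of_mul_eq_mul_right (Nat.factorial_pos (m - r))
  rw [← Nat.add_choose_mul_factorial_mul_factorial (m - r) b,
    ← Nat.choose_mul_factorial_mul_factorial h]
  ring

theorem sum_hermiteCoeff_mul_factorial {m n a b : ℕ} (h : m + b = n + a) :
    ∑ r ∈ range (min m n + 1), hermiteCoeff m n r * ((m - r + b)! : ℤ)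
      = a ! * b.descFactorial n := by
  have hterm : ∀ r ∈ range (n + 1), hermiteCoeff m n r * ((m - r + b)! : ℤ)
      = m ! * b ! * ((-1) ^ r * n.choose r * (a + n - r).choose b) := by
    intro r hr
    rcases le_or_gt r m with hrm | hrm
    · have hcast :=
        congrArg (Nat.cast (R := ℤ)) (factorial_mul_choose_mul_factorial_sub_add hrm b)
      push_cast at hcast
      rw [hermiteCoeff, show a + n - r = m - r + b by omega]
      linear_combination ((-1 : ℤ) ^ r * n.choose r) * hcast
    · have hr : r ≤ n := Nat.lt_succ_iff.mp (mem_range.mp hr)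
      rw [hermiteCoeff, Nat.choose_eq_zero_of_lt hrm,
        Nat.choose_eq_zero_of_lt (show a + n - r < b by omega)]
      simp
  rw [sum_subset (range_subset_range.mpr (by omega : min m n + 1 ≤ n + 1)) ?_,
    sum_congr rfl hterm, ← mul_sum, alternating_sum_choose_mul_choose]
  · split_ifs with hnb
    · obtain ⟨d, rfl⟩ := Nat.exists_eq_add_of_le hnb
      obtain rfl : a = m + d := by omega
      rw [Nat.add_sub_cancel_left, ← Nat.add_choose_mul_factorial_mul_factorial m d,
        ← Nat.factorial_mul_descFactorial (le_add_right le_rfl), Nat.add_sub_cancel_left]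
      push_cast
      ring
    · rw [Nat.descFactorial_eq_zero_iff_lt.mpr (not_le.mp hnb)]
      simp
  · intro r hr hr'
    rw [mem_range] at hr hr'
    rw [hermiteCoeff, Nat.choose_eq_zero_of_lt (show m < r by omega)]
    simp

noncomputable def gaussianDensityC (ρ : ℝ) (z : ℂ) : ℝ :=
  (π * ρ)⁻¹ * rexp (-normSq z / ρ)

theorem gaussianMeasureC_eq_withDensity (ρ : ℝ) :
    gaussianMeasureC ρ = volume.withDensity fun z => ENNReal.ofReal (gaussianDensityC ρ z) := rfl

@[fun_prop]
theorem continuous_gaussianDensityC (ρ : ℝ) : Continuous (gaussianDensityC ρ) := by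
  unfold gaussianDensityC
  fun_prop

theorem gaussianDensityC_nonneg {ρ : ℝ} (hρ : 0 ≤ ρ) (z : ℂ) :
    0 ≤ gaussianDensityC ρ z := by
  unfold gaussianDensityC
  positivity

section GaussianMeasure

variable {E : Type*} [NormedAddCommGroup E] [NormedSpace ℝ E] {ρ : ℝ}

theorem integral_gaussianMeasureC (hρ : 0 ≤ ρ) (f : ℂ → E) :
    ∫ z, f z ∂gaussianMeasureC ρ = ∫ z, gaussianDensityC ρ z • f z := by
  rw [gaussianMeasureC_eq_withDensity, integral_withDensity_eq_integral_toReal_smul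
    (continuous_gaussianDensityC ρ).measurable.ennreal_ofReal
    (.of_forall fun _ => ENNReal.ofReal_lt_top)]
  simp_rw [ENNReal.toReal_ofReal (gaussianDensityC_nonneg hρ _)]

theorem integrable_gaussianMeasureC_iff (hρ : 0 ≤ ρ) {f : ℂ → E} :
    Integrable f (gaussianMeasureC ρ) ↔ Integrable fun z => gaussianDensityC ρ z • f z := by
  rw [gaussianMeasureC_eq_withDensity, integrable_withDensity_iff_integrable_smul'
    (continuous_gaussianDensityC ρ).measurable.ennreal_ofReal
    (.of_forall fun _ => ENNReal.ofReal_lt_top)]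
  simp_rw [ENNReal.toReal_ofReal (gaussianDensityC_nonneg hρ _)]

theorem integral_gaussianMeasureC_comp_mul (hρ : 0 ≤ ρ) (u : Circle) (f : ℂ → E) :
    ∫ z, f (u * z) ∂gaussianMeasureC ρ = ∫ z, f z ∂gaussianMeasureC ρ := by
  have hdens : ∀ z, gaussianDensityC ρ (u * z) = gaussianDensityC ρ z := fun z => by
    rw [gaussianDensityC, gaussianDensityC, normSq_mul, Circle.normSq_coe, one_mul]
  rw [integral_gaussianMeasureC hρ, integral_gaussianMeasureC hρ]
  conv_lhs => enter [2, z]; rw [← hdens z, ← rotation_apply]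
  exact (rotation u).measurePreserving.integral_comp (rotation u).toHomeomorph.measurableEmbedding
    (fun z => gaussianDensityC ρ z • f z)

end GaussianMeasure

theorem integrable_pow_norm_mul_exp_neg_mul_sq_norm {E : Type*} [NormedAddCommGroup E]
    [NormedSpace ℝ E] [Nontrivial E] [FiniteDimensional ℝ E] [MeasurableSpace E] [BorelSpace E]
    (μ : Measure E) [μ.IsAddHaarMeasure] {b : ℝ} (hb : 0 < b) (k : ℕ) :
    Integrable (fun x : E => ‖x‖ ^ k * rexp (-b * ‖x‖ ^ 2)) μ := by
  rw [integrable_fun_norm_addHaar μ (f := fun y => y ^ k * rexp (-b * y ^ 2))]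
  refine (integrableOn_rpow_mul_exp_neg_mul_sq hb
    (s := ((Module.finrank ℝ E - 1 + k : ℕ) : ℝ)) (neg_one_lt_zero.trans_le (Nat.cast_nonneg _))
    ).congr_fun (fun y _ => ?_) measurableSet_Ioi
  dsimp only
  rw [Real.rpow_natCast, pow_add, smul_eq_mul, mul_assoc]

section Moments

variable {ρ : ℝ}

theorem integrable_monomial_gaussianMeasureC (hρ : 0 < ρ) (a b : ℕ) :
    Integrable (fun z : ℂ => z ^ a * conj z ^ b) (gaussianMeasureC ρ) := by
  rw [integrable_gaussianMeasureC_iff hρ.le]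
  refine ((integrable_pow_norm_mul_exp_neg_mul_sq_norm (volume : Measure ℂ) (inv_pos.mpr hρ)
    (a + b)).const_mul (π * ρ)⁻¹).mono' (by fun_prop) (.of_forall fun z => le_of_eq ?_)
  rw [norm_smul, Real.norm_of_nonneg (gaussianDensityC_nonneg hρ.le z), gaussianDensityC,
    norm_mul, norm_pow, norm_pow, Complex.norm_conj, normSq_eq_norm_sq, pow_add,
    show -ρ⁻¹ * ‖z‖ ^ 2 = -‖z‖ ^ 2 / ρ by ring]
  ring

theorem integral_monomial_gaussianMeasureC_of_ne (hρ : 0 ≤ ρ) {a b : ℕ} (hab : a ≠ b) :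
    ∫ z, z ^ a * conj z ^ b ∂gaussianMeasureC ρ = 0 := by
  -- rotating by `u` with `u ^ a * ū ^ b = -1` negates the integral
  set u := Circle.exp (π / ((a : ℝ) - b))
  have hu : (u : ℂ) ^ a * conj (u : ℂ) ^ b = -1 := by
    have hab' : (a : ℝ) - b ≠ 0 := sub_ne_zero.mpr (Nat.cast_injective.ne hab)
    have hθ : ((a : ℂ) - b) * ((π / ((a : ℝ) - b) : ℝ) : ℂ) = π := by
      exact_mod_cast mul_div_cancel₀ π hab'
    rw [Circle.coe_exp, ← Complex.exp_conj, ← Complex.exp_nat_mul, ← Complex.exp_nat_mul,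
      ← Complex.exp_add, ← Complex.exp_pi_mul_I, map_mul, conj_ofReal, conj_I]
    congr 1
    linear_combination I * hθ
  have h := integral_gaussianMeasureC_comp_mul hρ u fun z => z ^ a * conj z ^ b
  simp_rw [map_mul, mul_pow, mul_mul_mul_comm _ _ (conj (u : ℂ) ^ b), hu, neg_one_mul,
    integral_neg] at h
  exact self_eq_neg.mp h.symm

theorem integral_norm_pow_gaussianDensityC (hρ : 0 < ρ) (a : ℕ) :
    ∫ z : ℂ, gaussianDensityC ρ z * ‖z‖ ^ (2 * a) = a ! * ρ ^ a := by
  have hq : (-2 : ℝ) < 2 * a := by linarith [(Nat.cast_nonneg a : (0 : ℝ) ≤ a)]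
  calc ∫ z : ℂ, gaussianDensityC ρ z * ‖z‖ ^ (2 * a)
      = (π * ρ)⁻¹ * ∫ z : ℂ, ‖z‖ ^ (2 * a : ℝ) * rexp (-ρ⁻¹ * ‖z‖ ^ (2 : ℝ)) := by
        rw [← integral_const_mul]
        congr 1 with z
        rw [Real.rpow_two, show (2 * a : ℝ) = ((2 * a : ℕ) : ℝ) by push_cast; ring,
          Real.rpow_natCast, gaussianDensityC, normSq_eq_norm_sq,
          show -ρ⁻¹ * ‖z‖ ^ 2 = -‖z‖ ^ 2 / ρ by ring]
        ring
    _ = (π * ρ)⁻¹ * (π * ρ⁻¹ ^ (-((a : ℝ) + 1)) * Real.Gamma ((a : ℝ) + 1)) := by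
        rw [Complex.integral_rpow_mul_exp_neg_mul_rpow one_le_two hq (inv_pos.mpr hρ), neg_div,
          show (2 * (a : ℝ) + 2) / 2 = a + 1 by ring, mul_div_cancel_left₀ π two_ne_zero]
    _ = a ! * ρ ^ a := by
        rw [Real.Gamma_nat_eq_factorial, Real.inv_rpow hρ.le, Real.rpow_neg hρ.le, inv_inv,
          ← Nat.cast_succ, Real.rpow_natCast, pow_succ]
        field_simp

theorem integral_monomial_gaussianMeasureC (hρ : 0 < ρ) (a b : ℕ) :
    ∫ z, z ^ a * conj z ^ b ∂gaussianMeasureC ρ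
      = if a = b then (a ! : ℂ) * (ρ : ℂ) ^ a else 0 := by
  split_ifs with hab
  · subst hab
    have hnorm : ∀ z : ℂ, z ^ a * conj z ^ a = ((‖z‖ ^ (2 * a) : ℝ) : ℂ) := fun z => by
      rw [← mul_pow, mul_conj, normSq_eq_norm_sq]
      push_cast
      ring
    simp_rw [hnorm, integral_gaussianMeasureC hρ.le, Complex.real_smul, ← ofReal_mul,
      integral_complex_ofReal, integral_norm_pow_gaussianDensityC hρ]
    push_cast
    ring
  · exact integral_monomial_gaussianMeasureC_of_ne hρ.le hab

end Moments

theorem mul_monomial_mul_conj_monomial (c z : ℂ) (i j a b : ℕ) :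
    c * (z ^ i * conj z ^ j) * conj (z ^ a * conj z ^ b)
      = c * (z ^ (i + b) * conj z ^ (j + a)) := by
  simp only [map_mul, map_pow, conj_conj]
  ring

section Hermite

variable {ρ : ℝ}

theorem integrable_hermiteJ_mul_conj_monomial (hρ : 0 < ρ) (m n a b : ℕ) :
    Integrable (fun z => hermiteJ m n z ρ * conj (z ^ a * conj z ^ b)) (gaussianMeasureC ρ) := by
  simp_rw [hermiteJ_eq_sum, sum_mul, mul_monomial_mul_conj_monomial]
  exact integrable_finsetSum _ fun r _ => (integrable_monomial_gaussianMeasureC hρ _ _).const_mul _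

theorem integral_hermiteJ_mul_conj_monomial (hρ : 0 < ρ) (m n a b : ℕ) :
    ∫ z, hermiteJ m n z ρ * conj (z ^ a * conj z ^ b) ∂gaussianMeasureC ρ
      = if m + b = n + a then (a ! : ℂ) * b.descFactorial n * (ρ : ℂ) ^ (m + b) else 0 := by
  simp_rw [hermiteJ_eq_sum, sum_mul, mul_monomial_mul_conj_monomial]
  rw [integral_finsetSum _ fun r _ => (integrable_monomial_gaussianMeasureC hρ _ _).const_mul _]
  simp_rw [integral_const_mul, integral_monomial_gaussianMeasureC hρ]
  split_ifs with h
  · calc _ = ∑ r ∈ range (min m n + 1),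
            ((hermiteCoeff m n r * (m - r + b)! : ℤ) : ℂ) * (ρ : ℂ) ^ (m + b) := by
          refine sum_congr rfl fun r hr => ?_
          have hr := mem_range.mp hr
          rw [if_pos (by omega), show m + b = r + (m - r + b) by omega, pow_add]
          push_cast
          ring
      _ = _ := by
          rw [← sum_mul, ← Int.cast_sum, sum_hermiteCoeff_mul_factorial h]
          push_cast
          ring
  · refine sum_eq_zero fun r hr => ?_
    have hr := mem_range.mp hr
    rw [if_neg (by omega), mul_zero]

theorem integral_hermiteJ_mul_conj_monomial_eq_zero (hρ : 0 < ρ) {m n a b : ℕ}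
    (h : a < m ∨ b < n) :
    ∫ z, hermiteJ m n z ρ * conj (z ^ a * conj z ^ b) ∂gaussianMeasureC ρ = 0 := by
  rw [integral_hermiteJ_mul_conj_monomial hρ]
  split_ifs with hab
  · rw [Nat.descFactorial_eq_zero_iff_lt.mpr (by omega)]
    simp
  · rfl

theorem integral_hermiteJ_mul_conj_hermiteJ (hρ : 0 < ρ) (m n p q : ℕ) :
    ∫ z, hermiteJ m n z ρ * conj (hermiteJ p q z ρ) ∂gaussianMeasureC ρ
      = ∑ s ∈ range (min p q + 1), (hermiteCoeff p q s * ρ ^ s : ℂ) *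
          ∫ z, hermiteJ m n z ρ * conj (z ^ (p - s) * conj z ^ (q - s)) ∂gaussianMeasureC ρ := by
  simp_rw [conj_hermiteJ_eq_sum, mul_sum, mul_left_comm (hermiteJ m n _ ρ)]
  rw [integral_finsetSum _ fun s _ =>
    (integrable_hermiteJ_mul_conj_monomial hρ m n _ _).const_mul _]
  simp_rw [integral_const_mul]

theorem integral_hermiteJ_mul_conj_hermiteJ_of_lt (hρ : 0 < ρ) {m n p q : ℕ}
    (h : p < m ∨ q < n) :
    ∫ z, hermiteJ m n z ρ * conj (hermiteJ p q z ρ) ∂gaussianMeasureC ρ = 0 := by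
  rw [integral_hermiteJ_mul_conj_hermiteJ hρ]
  refine sum_eq_zero fun s _ => ?_
  rw [integral_hermiteJ_mul_conj_monomial_eq_zero hρ (by omega), mul_zero]

theorem integral_hermiteJ_mul_conj_self (hρ : 0 < ρ) (m n : ℕ) :
    ∫ z, hermiteJ m n z ρ * conj (hermiteJ m n z ρ) ∂gaussianMeasureC ρ
      = (m ! : ℂ) * n ! * (ρ : ℂ) ^ (m + n) := by
  rw [integral_hermiteJ_mul_conj_hermiteJ hρ, sum_range_succ', sum_eq_zero fun s hs => ?_,
    zero_add, integral_hermiteJ_mul_conj_monomial hρ, if_pos (by omega)]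
  · simp [hermiteCoeff, Nat.descFactorial_self]
  · have hs := mem_range.mp hs
    rw [integral_hermiteJ_mul_conj_monomial_eq_zero hρ (by omega), mul_zero]

end Hermite

/-- the family `{(m! n! ρ^{m+n})^{-1/2} J_{m,n}(·,ρ)}` is orthonormal in
`L²(ℂ, μ)`:  `∫ J_{m,n} conj(J_{p,q}) dμ = m! n! ρ^{m+n}` if `(m,n) = (p,q)` and `0` otherwise. -/
theorem hermiteJ_orthonormal (ρ : ℝ) (hρ : 0 < ρ) (m n p q : ℕ) :
    ∫ z : ℂ, hermiteJ m n z ρ * (starRingEnd ℂ) (hermiteJ p q z ρ) ∂(gaussianMeasureC ρ)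
      = if m = p ∧ n = q then (m.factorial : ℂ) * (n.factorial : ℂ) * (ρ : ℂ) ^ (m + n)
        else 0 := by
  split_ifs with h
  · obtain ⟨rfl, rfl⟩ := h
    exact integral_hermiteJ_mul_conj_self hρ m n
  rcases (by omega : (p < m ∨ q < n) ∨ (m < p ∨ n < q)) with hlt | hgt
  · exact integral_hermiteJ_mul_conj_hermiteJ_of_lt hρ hlt
  · have hswap := integral_conj (μ := gaussianMeasureC ρ)
      (f := fun z => hermiteJ p q z ρ * conj (hermiteJ m n z ρ))
    simp only [map_mul, conj_conj, mul_comm (conj (hermiteJ p q _ ρ)),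
      integral_hermiteJ_mul_conj_hermiteJ_of_lt hρ hgt, map_zero] at hswap
    exact hswap
end

section
/- For z = x + iy, the product of real Hermite polynomials expands in complex Hermite polynomials as H_k(x) H_{l−k}(y) = (i^{l−k} / 2^l) Σ_{m=0}^{l} (Σ_{r+s=m} C(k,r) C(l−k,s) (−1)^s) J_{m,l−m}(z), where J_{m,n}(z) = J_{m,n}(z,2). -/
/-
The raising operators `P = x - ∂ₓ` and `Q = y - ∂_y` on `ℂ[x, y]` commute and satisfy
`H_k(x) H_n(y) = P^k Q^n 1`. In the complex coordinates `z = x + iy`, `z̄ = x - iy` they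
combine to `P + iQ = z - 2∂_z̄` and `P - iQ = z̄ - 2∂_z`, which again commute. Since `2∂_z̄` kills `z` and
`2∂_z` kills `z̄`, we get `(z̄ - 2∂_z)^j 1 = z̄^j` and, by the binomial theorem,
`(z - 2∂_z̄)^m z̄^j = J_{m,j}(z, 2)`. Expanding `(2P)^k (-2iQ)^n` binomially in these two
operators and applying it to `1` gives the formula.
-/

open Finset Polynomial

namespace Derivation

variable {R A : Type*} [CommRing R] [CommRing A] [Algebra R A]

def raisingOp (D : Derivation R A A) (a : A) : Module.End R A :=
  LinearMap.mulLeft R a - D.toLinearMap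

variable (D : Derivation R A A) {a b : A}

@[simp]
theorem raisingOp_apply (f : A) : D.raisingOp a f = a * f - D f := rfl

theorem raisingOp_pow_mul_of_eq_zero {g : A} (hg : D g = 0) (n : ℕ) (f : A) :
    (D.raisingOp a ^ n) (f * g) = (D.raisingOp a ^ n) f * g := by
  induction n generalizing f with
  | zero => rfl
  | succ n ih =>
    rw [pow_succ, Module.End.mul_apply, Module.End.mul_apply, ← ih, raisingOp_apply,
      raisingOp_apply, D.leibniz, hg]
    congr 1
    ring

theorem map_aeval_int (p : ℤ[X]) : D (aeval a p) = aeval a (derivative p) * D a := by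
  rw [← D.restrictScalars_apply ℤ, map_aeval, restrictScalars_apply, smul_eq_mul]

theorem map_aeval_eq_zero (ha : D a = 0) (p : ℤ[X]) : D (aeval a p) = 0 := by
  rw [map_aeval_int, ha, mul_zero]

theorem raisingOp_pow_one_of_eq_one (ha : D a = 1) (n : ℕ) :
    (D.raisingOp a ^ n) 1 = aeval a (hermite n) := by
  induction n with
  | zero => simp
  | succ n ih =>
    rw [pow_succ', Module.End.mul_apply, ih, raisingOp_apply, hermite_succ, map_sub, map_mul,
      aeval_X, map_aeval_int, ha, mul_one]

theorem raisingOp_pow_one_of_eq_zero (ha : D a = 0) (n : ℕ) :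
    (D.raisingOp a ^ n) 1 = a ^ n := by
  induction n with
  | zero => simp
  | succ n ih =>
    rw [pow_succ', Module.End.mul_apply, ih, raisingOp_apply, leibniz_pow, ha, smul_zero,
      smul_zero, sub_zero, pow_succ']

theorem toLinearMap_pow_apply_pow {c : R} (hb : D b = algebraMap R A c) (r j : ℕ) :
    (D.toLinearMap ^ r) (b ^ j) = (j.descFactorial r * c ^ r) • b ^ (j - r) := by
  have key : ∀ p : R[X],
      (D.toLinearMap ^ r) (aeval b p) = c ^ r • aeval b (derivative^[r] p) := by
    induction r with
    | zero => simp
    | succ r ih =>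
      intro p
      have hD : D (aeval b p) = c • aeval b (derivative p) := by
        rw [map_aeval, hb, smul_eq_mul, mul_comm, Algebra.smul_def]
      rw [pow_succ, Module.End.mul_apply, coeFn_coe, hD, _root_.map_smul, ih, smul_smul, pow_succ',
        Function.iterate_succ_apply]
  have := key (X ^ j)
  rw [iterate_derivative_X_pow_eq_smul, _root_.map_smul, smul_smul, mul_comm] at this
  simpa only [map_pow (aeval b), aeval_X] using this

theorem commute_mulLeft_toLinearMap (ha : D a = 0) :
    Commute (LinearMap.mulLeft R a) D.toLinearMap :=
  LinearMap.ext fun f => by simp [D.leibniz, ha]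

theorem raisingOp_pow_apply_pow (ha : D a = 0) {c : R} (hb : D b = algebraMap R A c) (m j : ℕ) :
    (D.raisingOp a ^ m) (b ^ j) = ∑ r ∈ range (m + 1),
      ((-1) ^ r * m.choose r * j.descFactorial r * c ^ r) • (a ^ (m - r) * b ^ (j - r)) := by
  have hcomm : Commute (-D.toLinearMap) (LinearMap.mulLeft R a) :=
    (D.commute_mulLeft_toLinearMap ha).neg_right.symm
  rw [raisingOp, sub_eq_neg_add, hcomm.add_pow, LinearMap.sum_apply]
  refine sum_congr rfl fun r _ => ?_
  rw [(hcomm.pow_pow r (m - r)).eq, ← neg_one_smul R D.toLinearMap, _root_.smul_pow,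
    LinearMap.pow_mulLeft]
  simp only [Module.End.mul_apply, Module.End.natCast_apply, LinearMap.smul_apply,
    LinearMap.mulLeft_apply, LinearMap.map_smul_of_tower, D.toLinearMap_pow_apply_pow hb]
  rw [← Nat.cast_smul_eq_nsmul R, smul_smul, smul_smul]
  congr 1
  ring

theorem commute_raisingOp {E : Derivation R A A} (hDb : D b = 0) (hEa : E a = 0)
    (hDE : Commute D.toLinearMap E.toLinearMap) : Commute (D.raisingOp a) (E.raisingOp b) :=
  LinearMap.ext fun f => by
    have hf : D (E f) = E (D f) := LinearMap.congr_fun hDE.eq f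
    simp only [Module.End.mul_apply, raisingOp_apply, map_sub, leibniz, hDb, hEa, smul_eq_mul,
      hf, mul_zero]
    ring

end Derivation

theorem MvPolynomial.commute_pderiv {σ R : Type*} [CommRing R] (i j : σ) :
    Commute (pderiv (R := R) i).toLinearMap (pderiv (R := R) j).toLinearMap := by
  have h : ⁅pderiv (R := R) i, pderiv (R := R) j⁆ = 0 := by
    classical
    refine derivation_ext fun k => ?_
    simp [Derivation.commutator_apply, pderiv_X, Pi.single_apply, apply_ite]
  exact LinearMap.ext fun p => sub_eq_zero.mp <| by
    simpa only [Module.End.mul_apply, Derivation.coeFn_coe, Derivation.commutator_apply,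
      Derivation.zero_apply] using congrArg (· p) h

theorem Finset.sum_range_sum_range_eq_sum_range_sum_range_sub {M : Type*} [AddCommMonoid M]
    {k n : ℕ} (f : ℕ → ℕ → M) (hf : ∀ r s, k < r ∨ n < s → f r s = 0) :
    ∑ r ∈ range (k + 1), ∑ s ∈ range (n + 1), f r s =
      ∑ m ∈ range (k + n + 1), ∑ r ∈ range (m + 1), f r (m - r) := by
  rw [← sum_product', ← sum_fiberwise_of_maps_to (g := fun p => p.1 + p.2)
    (t := range (k + n + 1)) (by simp only [mem_product, mem_range]; omega)]
  refine sum_congr rfl fun m _ => ?_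
  rw [← Nat.sum_antidiagonal_eq_sum_range_succ f]
  refine sum_subset (fun p hp => by simp_all) fun p hp hpf => hf _ _ ?_
  simp_all
  omega

theorem Commute.add_pow_mul_neg_add_pow {S : Type*} [Ring S] {a b : S} (h : Commute a b)
    (k n : ℕ) :
    (a + b) ^ k * (-a + b) ^ n = ∑ m ∈ range (k + n + 1),
      (∑ r ∈ range (m + 1), (k.choose r * n.choose (m - r) * (-1) ^ (m - r) : ℤ)) •
        (a ^ m * b ^ (k + n - m)) := by
  have hterm : ∀ r ∈ range (k + 1), ∀ s ∈ range (n + 1),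
      a ^ r * b ^ (k - r) * (k.choose r : S) * ((-a) ^ s * b ^ (n - s) * (n.choose s : S)) =
        (k.choose r * n.choose s * (-1) ^ s : ℤ) • (a ^ (r + s) * b ^ (k + n - (r + s))) := by
    intro r hr s hs
    have hb : b ^ (k + n - (r + s)) = b ^ (k - r) * b ^ (n - s) := by
      rw [← pow_add]; congr 1; simp only [mem_range] at hr hs; omega
    rw [hb, ← neg_one_zsmul a, _root_.smul_pow, ← nsmul_eq_mul', ← nsmul_eq_mul',
      ← natCast_zsmul, ← natCast_zsmul]
    simp only [smul_mul_assoc, mul_smul_comm, smul_smul]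
    congr 1
    · ring
    · rw [pow_add, mul_assoc, mul_assoc, ← mul_assoc (b ^ (k - r)), ← (h.pow_pow s (k - r)).eq,
        mul_assoc]
  rw [h.add_pow, h.neg_left.add_pow, sum_mul_sum,
    sum_congr rfl fun r hr => sum_congr rfl (hterm r hr),
    sum_range_sum_range_eq_sum_range_sum_range_sub]
  · simp only [sum_smul]
    refine sum_congr rfl fun m _ => sum_congr rfl fun r hr => ?_
    rw [Nat.add_sub_of_le (Nat.le_of_lt_succ (mem_range.mp hr))]
  · intro r s hrs
    rcases hrs with hr | hs
    · simp [Nat.choose_eq_zero_of_lt hr]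
    · simp [Nat.choose_eq_zero_of_lt hs]

theorem hermiteJ_eq_sum_range (m n : ℕ) (z : ℂ) (ρ : ℝ) :
    hermiteJ m n z ρ = ∑ r ∈ range (m + 1),
      ((-1) ^ r * m.choose r * n.descFactorial r * (ρ : ℂ) ^ r) •
        (z ^ (m - r) * starRingEnd ℂ z ^ (n - r)) := by
  rw [hermiteJ]
  refine (sum_subset (fun r hr => ?_) fun r hr hrn => ?_).trans (sum_congr rfl fun r _ => ?_)
  · simp only [mem_range] at hr ⊢
    omega
  · simp only [mem_range] at hr hrn
    simp [Nat.choose_eq_zero_of_lt (by omega : n < r)]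
  · rw [Nat.descFactorial_eq_factorial_mul_choose, smul_eq_mul]
    push_cast
    ring

open MvPolynomial Complex

theorem MvPolynomial.aeval_aeval_X {σ R S : Type*} [CommRing R] [CommRing S] [Algebra R S]
    (g : σ → S) (i : σ) (p : ℤ[X]) :
    aeval (R := R) g (Polynomial.aeval (X i) p) = Polynomial.aeval (g i) p := by
  simpa using (Polynomial.aeval_algHom_apply ((aeval (R := R) g).restrictScalars ℤ) (X i) p).symm

namespace Wirtinger

noncomputable def z : MvPolynomial (Fin 2) ℂ := X 0 + I • X 1

noncomputable def zbar : MvPolynomial (Fin 2) ℂ := X 0 - I • X 1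

noncomputable def twoDz : Derivation ℂ (MvPolynomial (Fin 2) ℂ) (MvPolynomial (Fin 2) ℂ) :=
  pderiv 0 - I • pderiv 1

noncomputable def twoDzbar : Derivation ℂ (MvPolynomial (Fin 2) ℂ) (MvPolynomial (Fin 2) ℂ) :=
  pderiv 0 + I • pderiv 1

theorem twoDzbar_z : twoDzbar z = 0 := by
  simp [twoDzbar, z, smul_smul]

theorem twoDzbar_zbar : twoDzbar zbar = algebraMap ℂ _ 2 := by
  simp [twoDzbar, zbar, smul_smul, one_add_one_eq_two]
  exact (map_ofNat MvPolynomial.C 2).symm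

theorem twoDz_zbar : twoDz zbar = 0 := by
  simp [twoDz, zbar, smul_smul]

noncomputable def raiseX : Module.End ℂ (MvPolynomial (Fin 2) ℂ) := (pderiv 0).raisingOp (X 0)

noncomputable def raiseY : Module.End ℂ (MvPolynomial (Fin 2) ℂ) := (pderiv 1).raisingOp (X 1)

noncomputable def raiseZ : Module.End ℂ (MvPolynomial (Fin 2) ℂ) := twoDzbar.raisingOp z

noncomputable def raiseZbar : Module.End ℂ (MvPolynomial (Fin 2) ℂ) := twoDz.raisingOp zbar

theorem raiseX_add_I_smul_raiseY : raiseX + I • raiseY = raiseZ :=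
  LinearMap.ext fun f => by
    simp only [raiseX, raiseY, raiseZ, LinearMap.add_apply, LinearMap.smul_apply,
      Derivation.raisingOp_apply, twoDzbar, z, Derivation.add_apply, Derivation.smul_apply,
      add_mul, smul_mul_assoc]
    module

theorem raiseX_sub_I_smul_raiseY : raiseX - I • raiseY = raiseZbar :=
  LinearMap.ext fun f => by
    simp only [raiseX, raiseY, raiseZbar, LinearMap.sub_apply, LinearMap.smul_apply,
      Derivation.raisingOp_apply, twoDz, zbar, Derivation.sub_apply, Derivation.smul_apply,
      sub_mul, smul_mul_assoc]
    module

theorem commute_raiseX_raiseY : Commute raiseX raiseY :=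
  Derivation.commute_raisingOp _ (pderiv_X_of_ne Fin.zero_ne_one.symm)
    (pderiv_X_of_ne Fin.zero_ne_one) (commute_pderiv 0 1)

theorem commute_raiseZ_raiseZbar : Commute raiseZ raiseZbar := by
  have hXY : Commute raiseX (I • raiseY) := commute_raiseX_raiseY.smul_right I
  rw [← raiseX_add_I_smul_raiseY, ← raiseX_sub_I_smul_raiseY]
  exact ((Commute.refl _).sub_right hXY).add_left (hXY.symm.sub_right (Commute.refl _))

theorem raiseX_pow_mul_raiseY_pow_one (k n : ℕ) :
    (raiseX ^ k * raiseY ^ n) 1 =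
      Polynomial.aeval (X 0) (hermite k) * Polynomial.aeval (X 1) (hermite n) := by
  rw [Module.End.mul_apply, raiseY, (pderiv 1).raisingOp_pow_one_of_eq_one (pderiv_X_self 1),
    ← one_mul (Polynomial.aeval _ _), raiseX, Derivation.raisingOp_pow_mul_of_eq_zero _
      ((pderiv 0).map_aeval_eq_zero (pderiv_X_of_ne Fin.zero_ne_one.symm) _),
    Derivation.raisingOp_pow_one_of_eq_one _ (pderiv_X_self 0)]
  -- the two sides carry different, but definitionally equal, `Algebra ℤ` instances
  rfl

theorem aeval_raiseZ_pow_mul_raiseZbar_pow_one (x y : ℝ) (m j : ℕ) :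
    MvPolynomial.aeval ![(x : ℂ), y] ((raiseZ ^ m * raiseZbar ^ j) 1) =
      hermiteJ m j (x + I * y) 2 := by
  rw [Module.End.mul_apply, raiseZbar, twoDz.raisingOp_pow_one_of_eq_zero twoDz_zbar, raiseZ,
    twoDzbar.raisingOp_pow_apply_pow twoDzbar_z twoDzbar_zbar, hermiteJ_eq_sum_range]
  simp [z, zbar, sub_eq_add_neg]

theorem smul_hermite_mul_hermite_eq_sum (k n : ℕ) :
    ((2 : ℂ) ^ k * (-2 * I) ^ n) •
      (Polynomial.aeval (X 0) (hermite k) * Polynomial.aeval (X 1) (hermite n) :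
        MvPolynomial (Fin 2) ℂ) =
      ∑ m ∈ range (k + n + 1),
        (∑ r ∈ range (m + 1), (k.choose r * n.choose (m - r) * (-1) ^ (m - r) : ℤ)) •
          (raiseZ ^ m * raiseZbar ^ (k + n - m)) 1 := by
  have hX : raiseZ + raiseZbar = (2 : ℂ) • raiseX := by
    rw [← raiseX_add_I_smul_raiseY, ← raiseX_sub_I_smul_raiseY]
    module
  have hY : -raiseZ + raiseZbar = (-2 * I) • raiseY := by
    rw [← raiseX_add_I_smul_raiseY, ← raiseX_sub_I_smul_raiseY]
    module
  rw [← raiseX_pow_mul_raiseY_pow_one, ← LinearMap.smul_apply, ← smul_mul_smul_comm,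
    ← _root_.smul_pow, ← _root_.smul_pow, ← hX, ← hY,
    commute_raiseZ_raiseZbar.add_pow_mul_neg_add_pow, LinearMap.sum_apply]
  simp only [LinearMap.smul_apply]

end Wirtinger

/-- for `z = x + iy`, the product of probabilists' Hermite polynomials expands as
`H_k(x) H_{l−k}(y) = (i^{l−k}/2^l) Σ_{m=0}^{l} (Σ_{r+s=m} C(k,r) C(l−k,s) (−1)^s) J_{m,l−m}(z)`,
where `J_{m,n}(z) = J_{m,n}(z,2)`. -/
theorem real_hermite_expand_in_hermiteJ (l k : ℕ) (hk : k ≤ l) (x y : ℝ) :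
    (Polynomial.aeval (x : ℂ) (Polynomial.hermite k)) *
      (Polynomial.aeval (y : ℂ) (Polynomial.hermite (l - k))) =
    Complex.I ^ (l - k) / 2 ^ l *
      ∑ m ∈ Finset.range (l + 1),
        (∑ r ∈ Finset.range (m + 1),
          (k.choose r : ℂ) * ((l - k).choose (m - r) : ℂ) * (-1 : ℂ) ^ (m - r)) *
        hermiteJ m (l - m) ((x : ℂ) + Complex.I * (y : ℂ)) 2 := by
  obtain ⟨n, rfl⟩ := Nat.exists_eq_add_of_le hk
  rw [Nat.add_sub_cancel_left]
  have key := congrArg (MvPolynomial.aeval ![(x : ℂ), y])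
    (Wirtinger.smul_hermite_mul_hermite_eq_sum k n)
  simp only [map_smul, map_mul, map_sum, map_zsmul,
    Wirtinger.aeval_raiseZ_pow_mul_raiseZbar_pow_one] at key
  simp only [MvPolynomial.aeval_aeval_X, Matrix.cons_val_zero, Matrix.cons_val_one, smul_eq_mul,
    zsmul_eq_mul] at key
  push_cast at key
  have hscalar : I ^ n / 2 ^ (k + n) * (2 ^ k * (-2 * I) ^ n) = 1 := by
    rw [div_mul_eq_mul_div, div_eq_one_iff_eq (pow_ne_zero _ two_ne_zero), mul_left_comm,
      ← mul_pow, show I * (-2 * I) = 2 by rw [mul_left_comm, I_mul_I]; ring, pow_add]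
  rw [← key, ← mul_assoc, hscalar, one_mul]
end
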